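/- arXiv:1608.03706 — 7 statements merged into one kernel-verified Lean document; each statement's English description precedes it below -/
import Mathlib

section
/- Let p ≥ 1 and n ≥ 1 be integers, let G be an invertible p×p real matrix, let R be a p×p orthogonal matrix, and let l > 0 satisfy l^p = n·|det(G)| (equivalently, l = (n·Ω_p/Θ)^{1/p}·ρ_c, where Θ = Ω_p·ρ_c^p/|det(G)| is the thickness of the lattice, Ω_p the volume of the unit ball in ℝ^p, and ρ_c its covering radius). Let L = {(1/l)·Rᵀ Gᵀ f : f ∈ ℤ^p}. Then the Voronoi cell of the origin with respect to L, namely {z ∈ ℝ^p : ‖z‖ ≤ ‖z − x‖ for all x ∈ L}, has Lebesgue measure exactly 1/n. -/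
/-!
The Voronoi cell of the origin is a fundamental domain of the lattice: every point has a nearest
lattice point, so the translates of the cell cover the space, and two distinct translates meet only
inside the perpendicular bisector of their centres, which is Lebesgue-null. The volume of the cell
is therefore the covolume `|det M|` of the lattice `M ℤ^p`, and for `M = l⁻¹ Rᵀ Gᵀ` this is
`|det G| / l^p = 1 / n`.
-/

open MeasureTheory Matrix Submodule Metric AffineSubspace Pointwise

def voronoiCell {X : Type*} [PseudoMetricSpace X] (S : Set X) (x : X) : Set X :=
  {z | ∀ y ∈ S, dist z x ≤ dist z y}

section MetricSpace

variable {X : Type*} [PseudoMetricSpace X] {S : Set X}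

theorem isClosed_voronoiCell (S : Set X) (x : X) : IsClosed (voronoiCell S x) := by
  simp only [voronoiCell, Set.ofPred_forall]
  exact isClosed_biInter fun y _ => isClosed_le (by fun_prop) (by fun_prop)

theorem exists_mem_voronoiCell [ProperSpace X] (hS : IsClosed S) (hne : S.Nonempty) (z : X) :
    ∃ x ∈ S, z ∈ voronoiCell S x := by
  obtain ⟨x, hx, hdist⟩ := hS.exists_infDist_eq_dist hne z
  exact ⟨x, hx, fun y hy => hdist ▸ infDist_le_dist_of_mem hy⟩

theorem voronoiCell_inter_subset {x y : X} (hx : x ∈ S) (hy : y ∈ S) :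
    voronoiCell S x ∩ voronoiCell S y ⊆ {z | dist z x = dist z y} :=
  fun _ ⟨hzx, hzy⟩ => le_antisymm (hzx y hy) (hzy x hx)

theorem IsometryEquiv.image_voronoiCell (e : X ≃ᵢ X) (S : Set X) (x : X) :
    e '' voronoiCell S x = voronoiCell (e '' S) (e x) := by
  ext z
  obtain ⟨z, rfl⟩ := e.surjective z
  simp only [e.injective.mem_set_image, voronoiCell, Set.mem_ofPred_eq, Set.forall_mem_image,
    e.dist_eq]

end MetricSpace

section NormedAddCommGroup

variable {E : Type*} [NormedAddCommGroup E]

theorem vadd_voronoiCell_zero {S : Type*} [SetLike S E] [AddSubgroupClass S E] {L : S} {v : E}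
    (hv : v ∈ L) :
    v +ᵥ voronoiCell (L : Set E) 0 = voronoiCell L v := by
  have := (IsometryEquiv.constVAdd (X := E) v).image_voronoiCell (L : Set E) 0
  simp only [IsometryEquiv.constVAdd_apply, Set.image_vadd] at this
  rwa [vadd_coe_set hv, vadd_eq_add, add_zero] at this

end NormedAddCommGroup

section Lattice

variable {E : Type*} [NormedAddCommGroup E] [InnerProductSpace ℝ E] [FiniteDimensional ℝ E]
  [MeasurableSpace E] [BorelSpace E] (L : Submodule ℤ E) [DiscreteTopology L]
  (μ : Measure E) [μ.IsAddHaarMeasure]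

theorem isAddFundamentalDomain_voronoiCell :
    IsAddFundamentalDomain L (voronoiCell (L : Set E) 0) μ where
  nullMeasurableSet := (isClosed_voronoiCell _ _).nullMeasurableSet
  ae_covers := Filter.Eventually.of_forall fun z => by
    have hL : IsClosed (L : Set E) := AddSubgroup.isClosed_of_discrete (H := L.toAddSubgroup)
    obtain ⟨v, hv, hz⟩ := exists_mem_voronoiCell hL ⟨0, L.zero_mem⟩ z
    refine ⟨-⟨v, hv⟩, ?_⟩
    rwa [Submodule.vadd_def, Submodule.coe_neg, ← Set.mem_vadd_set_iff_neg_vadd_mem,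
      vadd_voronoiCell_zero hv]
  aedisjoint v w hvw := by
    have hcell (u : L) : u +ᵥ voronoiCell (L : Set E) 0 = voronoiCell L (u : E) :=
      vadd_voronoiCell_zero u.2
    have hbisector : voronoiCell (L : Set E) v ∩ voronoiCell L w ⊆ perpBisector (v : E) w :=
      fun z hz => mem_perpBisector_iff_dist_eq.2 (voronoiCell_inter_subset v.2 w.2 hz)
    refine measure_mono_null ?_ (Measure.addHaar_affineSubspace μ (perpBisector (v : E) w) ?_)
    · simpa only [Function.onFun, hcell] using hbisector
    · exact perpBisector_eq_top.not.2 (Subtype.coe_injective.ne hvw)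

theorem measure_voronoiCell_zero [IsZLattice ℝ L] :
    μ (voronoiCell (L : Set E) 0) = ENNReal.ofReal (ZLattice.covolume L μ) := by
  have hcovol := ZLattice.covolume_eq_measure_fundamentalDomain L μ
    (isAddFundamentalDomain_voronoiCell L μ)
  have hfinite : μ (voronoiCell (L : Set E) 0) ≠ ⊤ :=
    (ENNReal.toReal_ne_zero.1 (hcovol ▸ ZLattice.covolume_ne_zero L μ :)).2
  rw [hcovol, measureReal_def, ENNReal.ofReal_toReal hfinite]

end Lattice

theorem Matrix.mem_span_int_col_iff {m n R : Type*} [Fintype n] [CommRing R] (M : Matrix m n R)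
    (x : m → R) :
    x ∈ span ℤ (Set.range M.col) ↔ ∃ f : n → ℤ, M *ᵥ (fun i => (f i : R)) = x := by
  simp only [mem_span_range_iff_exists_fun, mulVec_eq_sum, op_smul_eq_smul,
    Int.cast_smul_eq_zsmul]
  rfl

theorem Matrix.abs_det_eq_one_of_transpose_mul_self {n R : Type*} [Fintype n] [DecidableEq n]
    [CommRing R] [LinearOrder R] [IsStrictOrderedRing R] {A : Matrix n n R} (hA : Aᵀ * A = 1) :
    |A.det| = 1 := by
  have hsq : A.det ^ 2 = 1 := by
    simpa only [det_mul, det_transpose, det_one, sq] using congrArg det hA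
  rw [← abs_pow_eq_one _ two_ne_zero, hsq, abs_one]

theorem volume_voronoiCell_mulVec_int_eq_abs_det {ι : Type*} [Fintype ι] [DecidableEq ι]
    (M : Matrix ι ι ℝ) (hM : IsUnit M.det) :
    volume {z : ι → ℝ | ∀ f : ι → ℤ,
      √(∑ k, z k ^ 2) ≤ √(∑ k, (z k - (M *ᵥ fun i => (f i : ℝ)) k) ^ 2)} =
      ENNReal.ofReal |M.det| := by
  let b : Module.Basis ι ℝ (ι → ℝ) := basisOfLinearIndependentOfCardEqFinrank' M.col
    (linearIndependent_cols_iff_isUnit.2 ((isUnit_iff_isUnit_det M).2 hM)) (by simp)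
  have hb : ⇑b = M.col := coe_basisOfLinearIndependentOfCardEqFinrank' ..
  let L := span ℤ (Set.range b)
  -- `ι → ℝ` carries the sup norm, so the cell is computed in `EuclideanSpace ℝ ι`.
  let L' := ZLattice.comap ℝ L (EuclideanSpace.equiv ι ℝ).toLinearMap
  have hcell : {z : ι → ℝ | ∀ f : ι → ℤ,
      √(∑ k, z k ^ 2) ≤ √(∑ k, (z k - (M *ᵥ fun i => (f i : ℝ)) k) ^ 2)} =
      WithLp.toLp 2 ⁻¹' voronoiCell (L' : Set (EuclideanSpace ℝ ι)) 0 := by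
    have hmem (y : EuclideanSpace ℝ ι) : y ∈ (L' : Set (EuclideanSpace ℝ ι)) ↔
        ∃ f : ι → ℤ, WithLp.toLp 2 (M *ᵥ fun i => (f i : ℝ)) = y := by
      change y.ofLp ∈ span ℤ (Set.range b) ↔ _
      rw [hb, mem_span_int_col_iff]
      exact exists_congr fun f => by rw [WithLp.ext_iff]
    ext z
    simp only [Set.mem_preimage, voronoiCell, Set.mem_ofPred_eq, hmem, forall_exists_index,
      forall_apply_eq_imp_iff, EuclideanSpace.dist_eq, Real.dist_eq, sq_abs, WithLp.ofLp_zero,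
      Pi.zero_apply, sub_zero]
  rw [hcell, (PiLp.volume_preserving_toLp ι).measure_preimage
      (isClosed_voronoiCell _ _).nullMeasurableSet,
    measure_voronoiCell_zero,
    ZLattice.covolume_comap L volume volume (PiLp.volume_preserving_ofLp ι),
    ZLattice.covolume_eq_det L (b.restrictScalars ℤ),
    show of (Subtype.val ∘ b.restrictScalars ℤ) = Mᵀ by ext; simp [hb], det_transpose]

theorem voronoi_cell_volume_general
    (p n : ℕ) (hn : 1 ≤ n)
    (G R : Matrix (Fin p) (Fin p) ℝ) (hG : IsUnit G.det)
    (hR : Rᵀ * R = 1) (l : ℝ)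
    (hln : l ^ p = (n : ℝ) * |G.det|) :
    volume {z : Fin p → ℝ |
      ∀ f : Fin p → ℤ,
        Real.sqrt (∑ k, z k ^ 2) ≤
          Real.sqrt (∑ k, (z k - (1 / l) * (Rᵀ * Gᵀ).mulVec (fun i => (f i : ℝ)) k) ^ 2)}
      = (n : ENNReal)⁻¹ := by
  set M := (1 / l) • (Rᵀ * Gᵀ)
  have hdetM : |M.det| = (n : ℝ)⁻¹ := by
    rw [det_smul, det_mul, det_transpose, det_transpose, Fintype.card_fin, one_div, inv_pow, hln,
      abs_mul, abs_mul, abs_det_eq_one_of_transpose_mul_self hR, abs_inv, abs_mul, abs_abs,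
      Nat.abs_cast]
    field_simp [hG.ne_zero]
  have hcell : {z : Fin p → ℝ | ∀ f : Fin p → ℤ, √(∑ k, z k ^ 2) ≤
        √(∑ k, (z k - (1 / l) * (Rᵀ * Gᵀ).mulVec (fun i => (f i : ℝ)) k) ^ 2)} =
      {z | ∀ f : Fin p → ℤ,
        √(∑ k, z k ^ 2) ≤ √(∑ k, (z k - (M *ᵥ fun i => (f i : ℝ)) k) ^ 2)} := by
    simp only [M, smul_mulVec, Pi.smul_apply, smul_eq_mul]
  have hn0 : (0 : ℝ) < n := by exact_mod_cast hn
  have hMunit : IsUnit M.det :=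
    isUnit_iff_ne_zero.2 (abs_ne_zero.1 (by rw [hdetM]; exact inv_ne_zero hn0.ne'))
  rw [hcell, volume_voronoiCell_mulVec_int_eq_abs_det M hMunit, hdetM,
    ENNReal.ofReal_inv_of_pos hn0, ENNReal.ofReal_natCast]

/-- Theorem 1 of He (2017): if `l^p = n * |det G|`, then the Voronoi cell of the
origin of the lattice `{(1/l) • Rᵀ Gᵀ f : f ∈ ℤ^p}` has Lebesgue measure `1/n`. -/
theorem voronoi_cell_volume
    (p n : ℕ) (hp : 1 ≤ p) (hn : 1 ≤ n)
    (G R : Matrix (Fin p) (Fin p) ℝ) (hG : IsUnit G.det)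
    (hR : Rᵀ * R = 1) (l : ℝ) (hl : 0 < l)
    (hln : l ^ p = (n : ℝ) * |G.det|) :
    volume {z : Fin p → ℝ |
      ∀ f : Fin p → ℤ,
        Real.sqrt (∑ k, z k ^ 2) ≤
          Real.sqrt (∑ k, (z k - (1 / l) * (Rᵀ * Gᵀ).mulVec (fun i => (f i : ℝ)) k) ^ 2)}
      = (n : ENNReal)⁻¹ :=
  voronoi_cell_volume_general p n hn G R hG hR l hln
end

section
/- Let G be an invertible p×p real matrix with rows v₁, …, v_p, let η_j = v_j − P_j(v_j) be the component of v_j orthogonal to the span of the other rows, let R be a p×p orthogonal matrix, let l > 0 and ρ ≥ 0, and let δ ∈ ℝ^p with ‖δ‖ ≤ ρ. If f = (f₁, …, f_p) ∈ ℤ^p and there exists j with |f_j| > l√p/(2‖η_j‖) + ρ/‖η_j‖, then Rᵀ Gᵀ f + δ ∉ [−l/2, l/2]^p. -/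
/-!
Pair `Rᵀ Gᵀ f = Rᵀ (∑ f_k v_k)` with `η_j`: since `η_j` is orthogonal to every `v_k` with `k ≠ j`
and `⟪η_j, v_j⟫ = ‖η_j‖²`, Cauchy–Schwarz gives `|f_j| ‖η_j‖ ≤ ‖Gᵀ f‖ = ‖Rᵀ Gᵀ f‖`, the rotation
being an isometry. A point of the cube `[-l/2, l/2]^p` has norm at most `l √p / 2`, so membership
of `Rᵀ Gᵀ f + δ` would force `|f_j| ‖η_j‖ ≤ l √p / 2 + ρ`. Linear independence of the rows makes
`η_j ≠ 0`, so this contradicts the hypothesis on `|f_j|`.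
-/

open Matrix

section OrthogonalResidual

variable {𝕜 E ι : Type*} [RCLike 𝕜] [NormedAddCommGroup E] [InnerProductSpace 𝕜 E] [Fintype ι]

theorem inner_sub_starProjection_self (K : Submodule 𝕜 E) [K.HasOrthogonalProjection] (x : E) :
    inner 𝕜 (x - K.starProjection x) x = (‖x - K.starProjection x‖ : 𝕜) ^ 2 := by
  have h := inner_sub_right (𝕜 := 𝕜) (x - K.starProjection x) x (K.starProjection x)
  rwa [K.starProjection_inner_eq_zero x _ (K.starProjection_apply_mem x), sub_zero,
    inner_self_eq_norm_sq_to_K, eq_comm] at h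

theorem inner_sum_smul_eq_of_mem_orthogonal (K : Submodule 𝕜 E) (v : ι → E) (j : ι)
    (hv : ∀ k ≠ j, v k ∈ K) {y : E} (hy : y ∈ Kᗮ) (c : ι → 𝕜) :
    inner 𝕜 y (∑ k, c k • v k) = c j * inner 𝕜 y (v j) := by
  rw [inner_sum, Finset.sum_eq_single_of_mem j (Finset.mem_univ j) fun k _ hk => ?_,
    inner_smul_right]
  rw [inner_smul_right, K.inner_left_of_mem_orthogonal (hv k hk) hy, mul_zero]

theorem norm_mul_norm_sub_starProjection_le (K : Submodule 𝕜 E) [K.HasOrthogonalProjection]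
    (v : ι → E) (j : ι) (hv : ∀ k ≠ j, v k ∈ K) (c : ι → 𝕜) :
    ‖c j‖ * ‖v j - K.starProjection (v j)‖ ≤ ‖∑ k, c k • v k‖ := by
  set η := v j - K.starProjection (v j)
  have key : inner 𝕜 η (∑ k, c k • v k) = c j * (‖η‖ : 𝕜) ^ 2 := by
    rw [inner_sum_smul_eq_of_mem_orthogonal K v j hv (K.sub_starProjection_mem_orthogonal _),
      inner_sub_starProjection_self]
  rcases (norm_nonneg η).eq_or_lt with hη | hη
  · rw [← hη, mul_zero]; exact norm_nonneg _
  have cauchy_schwarz := norm_inner_le_norm (𝕜 := 𝕜) η (∑ k, c k • v k)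
  rw [key, norm_mul, norm_pow, RCLike.norm_ofReal, abs_norm, sq, ← mul_assoc,
    mul_comm ‖η‖ ‖∑ k, c k • v k‖] at cauchy_schwarz
  exact le_of_mul_le_mul_right cauchy_schwarz hη

end OrthogonalResidual

theorem EuclideanSpace.norm_le_sqrt_card_mul {ι : Type*} [Fintype ι] {x : EuclideanSpace ℝ ι}
    {a : ℝ} (ha : 0 ≤ a) (hx : ∀ i, |x i| ≤ a) : ‖x‖ ≤ √(Fintype.card ι) * a := by
  rw [EuclideanSpace.norm_eq, ← Real.sqrt_sq ha, ← Real.sqrt_mul (Nat.cast_nonneg _)]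
  gcongr
  calc ∑ i, ‖x i‖ ^ 2 ≤ ∑ _i : ι, a ^ 2 := by
        gcongr with i
        exact (Real.norm_eq_abs _).trans_le (hx i)
    _ = Fintype.card ι * a ^ 2 := by simp

theorem Matrix.norm_toLp_mulVec_of_mem_unitaryGroup {𝕜 n : Type*} [RCLike 𝕜] [Fintype n]
    [DecidableEq n] {A : Matrix n n 𝕜} (hA : A ∈ unitaryGroup n 𝕜) (x : n → 𝕜) :
    ‖WithLp.toLp 2 (A *ᵥ x)‖ = ‖WithLp.toLp 2 x‖ := by
  rw [← toEuclideanCLM_toLp]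
  exact ContinuousLinearMap.norm_map_of_mem_unitary
    (Unitary.map_mem (toEuclideanCLM (n := n) (𝕜 := 𝕜)) hA) _

theorem Matrix.linearIndependent_toLp_row {K n : Type*} [Field K] [Fintype n] [DecidableEq n]
    {A : Matrix n n K} (hA : IsUnit A.det) : LinearIndependent K fun i => WithLp.toLp 2 (A i) :=
  (linearIndependent_rows_iff_isUnit.mpr ((isUnit_iff_isUnit_det A).mpr hA)).map'
    (WithLp.linearEquiv 2 K (n → K)).symm.toLinearMap (LinearEquiv.ker _)

theorem Matrix.toLp_transpose_mulVec {R m n : Type*} [CommRing R] [Fintype m]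
    (A : Matrix m n R) (x : m → R) :
    WithLp.toLp 2 (Aᵀ *ᵥ x) = ∑ i, x i • WithLp.toLp 2 (A i) := by
  rw [mulVec_transpose, vecMul_eq_sum, WithLp.toLp_sum]
  simp [WithLp.toLp_smul]

theorem lattice_point_outside_cube_general
    (p : ℕ) (G R : Matrix (Fin p) (Fin p) ℝ) (hG : IsUnit G.det) (hR : Rᵀ * R = 1)
    (v : Fin p → EuclideanSpace ℝ (Fin p)) (hv : ∀ j k, v j k = G j k)
    (η : Fin p → EuclideanSpace ℝ (Fin p))
    (hη : ∀ j, η j = v j -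
      (Submodule.orthogonalProjectionOnto (Submodule.span ℝ (v '' {k | k ≠ j})) (v j) : EuclideanSpace ℝ (Fin p)))
    (l ρ : ℝ) (hl : 0 < l)
    (δ : EuclideanSpace ℝ (Fin p)) (hδ : ‖δ‖ ≤ ρ)
    (f : Fin p → ℤ) (j : Fin p)
    (hf : l * Real.sqrt p / (2 * ‖η j‖) + ρ / ‖η j‖ < (|f j| : ℝ)) :
    ¬ ∀ k, (Rᵀ * Gᵀ).mulVec (fun i => (f i : ℝ)) k + δ k ∈ Set.Icc (-(l / 2)) (l / 2) := by
  intro hcube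
  obtain rfl : v = fun i => WithLp.toLp 2 (G i) := funext fun i => by ext k; exact hv i k
  set K := Submodule.span ℝ ((fun i => WithLp.toLp 2 (G i)) '' {k | k ≠ j})
  have hηj : η j = WithLp.toLp 2 (G j) - K.starProjection (WithLp.toLp 2 (G j)) := hη j
  have hη_pos : 0 < ‖η j‖ := by
    rw [norm_pos_iff, hηj, sub_ne_zero]
    intro h
    refine (linearIndependent_toLp_row hG).notMem_span_image (s := {k | k ≠ j}) (x := j)
      (by simp) ?_
    exact h ▸ K.starProjection_apply_mem _
  have hRt : Rᵀ ∈ unitaryGroup (Fin p) ℝ := by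
    rwa [mem_unitaryGroup_iff, star_eq_conjTranspose, conjTranspose_eq_transpose_of_trivial,
      transpose_transpose]
  set w := WithLp.toLp 2 ((Rᵀ * Gᵀ) *ᵥ fun i => (f i : ℝ)) with hw
  have h_lower : |(f j : ℝ)| * ‖η j‖ ≤ ‖w‖ := by
    rw [hw, ← mulVec_mulVec, norm_toLp_mulVec_of_mem_unitaryGroup hRt, toLp_transpose_mulVec, hηj]
    simpa only [Real.norm_eq_abs] using norm_mul_norm_sub_starProjection_le K _ j
      (fun k hk => Submodule.subset_span ⟨k, hk, rfl⟩) fun i => (f i : ℝ)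
  have h_upper : ‖w + δ‖ ≤ √p * (l / 2) := by
    simpa using EuclideanSpace.norm_le_sqrt_card_mul (x := w + δ) (by positivity)
      fun k => abs_le.mpr (hcube k)
  have h_bound : |(f j : ℝ)| * ‖η j‖ ≤ √p * (l / 2) + ρ := by
    linarith [norm_le_add_norm_add w δ]
  rw [show l * √p / (2 * ‖η j‖) + ρ / ‖η j‖ = (√p * (l / 2) + ρ) / ‖η j‖ by ring,
    div_lt_iff₀ hη_pos] at hf
  exact hf.not_ge h_bound

/-- Theorem 2 of He (2017): if `|f j| > l√p/(2‖η j‖) + ρ/‖η j‖` for some `j`, then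
`Rᵀ Gᵀ f + δ` lies outside the cube `[-l/2, l/2]^p` whenever `‖δ‖ ≤ ρ`. -/
theorem lattice_point_outside_cube
    (p : ℕ) (G R : Matrix (Fin p) (Fin p) ℝ) (hG : IsUnit G.det) (hR : Rᵀ * R = 1)
    (v : Fin p → EuclideanSpace ℝ (Fin p)) (hv : ∀ j k, v j k = G j k)
    (η : Fin p → EuclideanSpace ℝ (Fin p))
    (hη : ∀ j, η j = v j -
      (Submodule.orthogonalProjectionOnto (Submodule.span ℝ (v '' {k | k ≠ j})) (v j) : EuclideanSpace ℝ (Fin p)))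
    (l ρ : ℝ) (hl : 0 < l) (hρ : 0 ≤ ρ)
    (δ : EuclideanSpace ℝ (Fin p)) (hδ : ‖δ‖ ≤ ρ)
    (f : Fin p → ℤ) (j : Fin p)
    (hf : l * Real.sqrt p / (2 * ‖η j‖) + ρ / ‖η j‖ < (|f j| : ℝ)) :
    ¬ ∀ k, (Rᵀ * Gᵀ).mulVec (fun i => (f i : ℝ)) k + δ k ∈ Set.Icc (-(l / 2)) (l / 2) :=
  lattice_point_outside_cube_general p G R hG hR v hv η hη l ρ hl δ hδ f j hf
end

section
/- Fix l > 0. Suppose x₀ = (x_{0,1}, x_{0,2}) = G₂ f₀ / l for some f₀ ∈ ℤ² with f₀ ≠ (0,0), and let m ≥ 1 be an integer. If |x_{0,1}| < |y_{m,1}|, then |x_{0,2}| > y_{m,2}. -/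
open Matrix

/-- The generator matrix `G₂` of the 15-degree rotated hexagonal lattice. -/
noncomputable def G₂ : Matrix (Fin 2) (Fin 2) ℝ :=
  !![(Real.sqrt 3 - 1) / (2 * Real.sqrt 2), -(Real.sqrt 3 + 1) / (2 * Real.sqrt 2);
     -(Real.sqrt 3 + 1) / (2 * Real.sqrt 2), (Real.sqrt 3 - 1) / (2 * Real.sqrt 2)]

/-- The minimum vectors `y_m` for `G₂`: for `m = 2k+1`,
`y_m = (-(√3+1)^(2k+1)/2^(k+3/2), (√3-1)^(2k+1)/2^(k+3/2))/l`, and for `m = 2k+2`,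
`y_m = ((√3+1)^(2k+2)/2^(k+3/2), (√3-1)^(2k+2)/2^(k+3/2))/l`. -/
noncomputable def yvec (l : ℝ) (m : ℕ) : ℝ × ℝ :=
  if m % 2 = 1 then
    (-((Real.sqrt 3 + 1) ^ m) / ((2 : ℝ) ^ ((m - 1) / 2) * 2 * Real.sqrt 2) / l,
      ((Real.sqrt 3 - 1) ^ m) / ((2 : ℝ) ^ ((m - 1) / 2) * 2 * Real.sqrt 2) / l)
  else
    (((Real.sqrt 3 + 1) ^ m) / ((2 : ℝ) ^ (m / 2 - 1) * 2 * Real.sqrt 2) / l,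
      ((Real.sqrt 3 - 1) ^ m) / ((2 : ℝ) ^ (m / 2 - 1) * 2 * Real.sqrt 2) / l)

/-!
Write `f₀ = (a, b)`, `u = a - b`, `v = a + b`. Then `2√2 l x₀ = (√3u - v, -(√3u + v))`, so
`8 l² |x₀,₁ x₀,₂|` is the absolute value of the norm `3u² - v²` from `ℤ[√3]`. That norm is a
nonzero integer, and since `u ≡ v mod 2` it equals `2` or has absolute value at least `4`. With
the same scaling, `|y_{m,1}| y_{m,2}` is `2` for odd `m` and `4` for even `m ≥ 2`, so
`|x₀,₁| < |y_{m,1}|` forces `|x₀,₂| > y_{m,2}`, except possibly for even `m = 2n + 2` and norm `2`.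
In that case `|y_{m,1}|` is scaled to `2(2 + √3)^(n+1)`, and the solutions of `3u² - v² = 2` gain
the missing factor `2` by never landing in `[(2 + √3)^k, 2(2 + √3)^k)`.
-/

open Real

lemma lt_of_mul_le_mul_of_lt {a b R T : ℝ} (ha : 0 ≤ a) (hT : 0 < T) (haR : a < R)
    (h : T * R ≤ a * b) : T < b := by
  by_contra! hb
  nlinarith

lemma div_lt_abs_div_of_abs_div_lt {a b r t c : ℝ} (ht : 0 ≤ t) (hab : |a| < |r| → t < |b|)
    (h : |a / c| < |r / c|) : t / c < |b / c| := by
  rw [abs_div, abs_div] at h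
  have hc : 0 < |c| := abs_pos.2 fun hc => by simp [hc] at h
  calc t / c ≤ |t / c| := le_abs_self _
    _ = t / |c| := by rw [abs_div, abs_of_nonneg ht]
    _ < |b| / |c| := by gcongr; exact hab ((div_lt_div_iff_of_pos_right hc).1 h)
    _ = |b / c| := (abs_div b c).symm

lemma sqrt_three_sub_one_pos : 0 < √3 - 1 := by
  rw [sub_pos, Real.lt_sqrt zero_le_one]; norm_num

lemma sqrt_three_lt_two : √3 < 2 := by
  rw [Real.sqrt_lt' two_pos]; norm_num

lemma sqrt_three_mul_sub_mul_add (u v : ℝ) :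
    (√3 * u - v) * (√3 * u + v) = 3 * u ^ 2 - v ^ 2 := by
  linear_combination u ^ 2 * Real.mul_self_sqrt (show (0 : ℝ) ≤ 3 by norm_num)

lemma sqrt_three_sub_one_mul_add_one : (√3 - 1) * (√3 + 1) = 2 := by
  linear_combination Real.mul_self_sqrt (show (0 : ℝ) ≤ 3 by norm_num)

lemma two_sub_sqrt_three_mul_two_add : (2 - √3) * (2 + √3) = 1 := by
  linear_combination -Real.mul_self_sqrt (show (0 : ℝ) ≤ 3 by norm_num)

lemma sqrt_three_add_one_sq : (√3 + 1) ^ 2 = 2 * (2 + √3) := by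
  linear_combination Real.mul_self_sqrt (show (0 : ℝ) ≤ 3 by norm_num)

lemma sqrt_three_sub_one_sq : (√3 - 1) ^ 2 = 2 * (2 - √3) := by
  linear_combination Real.mul_self_sqrt (show (0 : ℝ) ≤ 3 by norm_num)

lemma sqrt_three_sub_one_pow_div_mul_add_one_pow_div {m j : ℕ} (hj : 2 * j ≤ m) :
    (√3 - 1) ^ m / 2 ^ j * ((√3 + 1) ^ m / 2 ^ j) = 2 ^ (m - 2 * j) := by
  rw [div_mul_div_comm, ← mul_pow, sqrt_three_sub_one_mul_add_one, ← pow_add, ← two_mul,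
    pow_sub₀ _ two_ne_zero hj, div_eq_mul_inv]

lemma sqrt_three_add_one_pow_even_div (n : ℕ) :
    (√3 + 1) ^ (2 * n + 2) / 2 ^ n = 2 * (2 + √3) ^ (n + 1) := by
  rw [show 2 * n + 2 = 2 * (n + 1) by ring, pow_mul, sqrt_three_add_one_sq, mul_pow, pow_succ]
  field_simp

lemma sqrt_three_sub_one_pow_even_div (n : ℕ) :
    (√3 - 1) ^ (2 * n + 2) / 2 ^ n = 2 * (2 - √3) ^ (n + 1) := by
  rw [show 2 * n + 2 = 2 * (n + 1) by ring, pow_mul, sqrt_three_sub_one_sq, mul_pow, pow_succ]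
  field_simp

lemma three_mul_sq_sub_sq_ne_zero {u v : ℤ} (h : u ≠ 0 ∨ v ≠ 0) : 3 * u ^ 2 - v ^ 2 ≠ 0 := by
  intro hQ
  have h3 : ∀ n : ℤ, (3 : ℤ) ≠ n * n := by
    intro n hn
    rcases le_or_gt |n| 1 with h | h <;> nlinarith [abs_mul_abs_self n, abs_nonneg n]
  have := (Zsqrtd.norm_eq_zero h3 ⟨v, u⟩).1 (by rw [Zsqrtd.norm_def]; linear_combination -hQ)
  simp_all [Zsqrtd.ext_iff]

lemma three_mul_sq_sub_sq_eq_two_or_four_le_abs {u v : ℤ} (hpar : Even (u + v))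
    (h : u ≠ 0 ∨ v ≠ 0) : 3 * u ^ 2 - v ^ 2 = 2 ∨ 4 ≤ |3 * u ^ 2 - v ^ 2| := by
  have hQ := three_mul_sq_sub_sq_ne_zero h
  rw [le_abs']
  obtain ⟨w, hw⟩ := hpar
  rcases Int.even_or_odd' u with ⟨a, rfl | rfl⟩ <;> rcases Int.even_or_odd' v with ⟨b, rfl | rfl⟩
  · have : 3 * (2 * a) ^ 2 - (2 * b) ^ 2 = 4 * (3 * a ^ 2 - b ^ 2) := by ring
    omega
  · omega
  · omega
  · obtain ⟨c, hc⟩ := Int.even_mul_succ_self a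
    obtain ⟨d, hd⟩ := Int.even_mul_succ_self b
    have : 3 * (2 * a + 1) ^ 2 - (2 * b + 1) ^ 2 = 8 * (3 * c - d) + 2 := by
      linear_combination 12 * hc - 4 * hd
    omega

/-- `(u, v) ↦ (2u + v, 3u + 2v)` preserves `3u² - v²` and multiplies `√3u - v` by
`2 - √3 = (2 + √3)⁻¹`, which reduces to `k = 0`. There `1 ≤ |√3u - v| < 2` and
`(√3u - v)(√3u + v) = 2` force `|2v| ≤ 1`, so `v = 0` and `3u² = 2`. -/
lemma abs_sqrt_three_mul_sub_lt_of_lt_two_mul {u v : ℤ} (hQ : 3 * u ^ 2 - v ^ 2 = 2) (k : ℕ)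
    (h : |√3 * u - v| < 2 * (2 + √3) ^ k) : |√3 * u - v| < (2 + √3) ^ k := by
  induction k generalizing u v with
  | zero =>
    rw [pow_zero, mul_one] at h
    rw [pow_zero]
    by_contra! h1
    set α := √3 * u - v
    have hαβ : α * (α + 2 * v) = 2 := by
      rw [show α + 2 * v = √3 * u + v by ring, sqrt_three_mul_sub_mul_add]; exact_mod_cast hQ
    have hα1 : 1 ≤ α ^ 2 := one_le_sq_iff_one_le_abs _ |>.2 h1
    have hα4 : α ^ 2 < 4 := by nlinarith [sq_abs α, abs_nonneg α]
    have hv : (4 * v ^ 2 : ℝ) ≤ 1 := by nlinarith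
    have hv' : 4 * v ^ 2 ≤ 1 := by exact_mod_cast hv
    have := sq_nonneg v
    omega
  | succ k ih =>
    have hdesc : √3 * ((2 * u + v : ℤ) : ℝ) - ((3 * u + 2 * v : ℤ) : ℝ) =
        (2 - √3) * (√3 * u - v) := by
      push_cast
      linear_combination (u : ℝ) * Real.mul_self_sqrt (show (0 : ℝ) ≤ 3 by norm_num)
    have h2s : 0 < 2 - √3 := sub_pos.2 sqrt_three_lt_two
    have hunit := two_sub_sqrt_three_mul_two_add
    have hdescent := ih (u := 2 * u + v) (v := 3 * u + 2 * v) (by linear_combination hQ)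
    rw [hdesc, abs_mul, abs_of_pos h2s] at hdescent
    rw [pow_succ'] at h ⊢
    calc |√3 * u - v| = (2 + √3) * ((2 - √3) * |√3 * u - v|) := by
          linear_combination (-|√3 * u - v|) * hunit
      _ < (2 + √3) * (2 + √3) ^ k := by
        gcongr
        refine hdescent ?_
        calc (2 - √3) * |√3 * u - v| < (2 - √3) * (2 * ((2 + √3) * (2 + √3) ^ k)) := by gcongr
          _ = 2 * (2 + √3) ^ k := by linear_combination (2 * (2 + √3) ^ k) * hunit

lemma lt_abs_sqrt_three_mul_add_of_abs_sqrt_three_mul_sub_lt {u v : ℤ} (hpar : Even (u + v))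
    (hne : u ≠ 0 ∨ v ≠ 0) {m : ℕ} (h : |√3 * u - v| < (√3 + 1) ^ m / 2 ^ ((m - 1) / 2)) :
    (√3 - 1) ^ m / 2 ^ ((m - 1) / 2) < |√3 * u + v| := by
  have hprod : |√3 * u - v| * |√3 * u + v| = ((|3 * u ^ 2 - v ^ 2| : ℤ) : ℝ) := by
    rw [← abs_mul, sqrt_three_mul_sub_mul_add]; push_cast; rfl
  have hT : 0 < (√3 - 1) ^ m / 2 ^ ((m - 1) / 2) :=
    div_pos (pow_pos sqrt_three_sub_one_pos _) (by positivity)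
  have hRT := sqrt_three_sub_one_pow_div_mul_add_one_pow_div (m := m) (j := (m - 1) / 2)
    (by omega)
  rcases three_mul_sq_sub_sq_eq_two_or_four_le_abs hpar hne with hQ | hQ
  · by_cases hm : m - 2 * ((m - 1) / 2) ≤ 1
    · refine lt_of_mul_le_mul_of_lt (abs_nonneg _) hT h ?_
      rw [hRT, hprod, hQ]
      calc (2 : ℝ) ^ (m - 2 * ((m - 1) / 2)) ≤ 2 ^ 1 := pow_le_pow_right₀ one_le_two hm
        _ = _ := by norm_num
    obtain ⟨n, rfl⟩ : ∃ n, m = 2 * n + 2 := ⟨(m - 1) / 2, by omega⟩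
    rw [show (2 * n + 2 - 1) / 2 = n by omega] at h hT ⊢
    rw [sqrt_three_add_one_pow_even_div] at h
    rw [sqrt_three_sub_one_pow_even_div] at hT ⊢
    refine lt_of_mul_le_mul_of_lt (abs_nonneg _) hT
      (abs_sqrt_three_mul_sub_lt_of_lt_two_mul hQ _ h) ?_
    rw [hprod, hQ, mul_assoc, ← mul_pow, two_sub_sqrt_three_mul_two_add]
    norm_num
  · refine lt_of_mul_le_mul_of_lt (abs_nonneg _) hT h ?_
    rw [hRT, hprod]
    calc (2 : ℝ) ^ (m - 2 * ((m - 1) / 2)) ≤ 2 ^ 2 := pow_le_pow_right₀ one_le_two (by omega)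
      _ = ((4 : ℤ) : ℝ) := by norm_num
      _ ≤ _ := Int.cast_le.2 hQ

lemma G₂_mulVec_zero (f : Fin 2 → ℝ) :
    (G₂ *ᵥ f) 0 = (√3 * (f 0 - f 1) - (f 0 + f 1)) / (2 * √2) := by
  simp only [mulVec, dotProduct, G₂, of_apply, cons_val', cons_val_fin_one, cons_val_zero,
    cons_val_one, Fin.sum_univ_two]
  ring

lemma G₂_mulVec_one (f : Fin 2 → ℝ) :
    (G₂ *ᵥ f) 1 = -(√3 * (f 0 - f 1) + (f 0 + f 1)) / (2 * √2) := by
  simp only [mulVec, dotProduct, G₂, of_apply, cons_val', cons_val_fin_one, cons_val_zero,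
    cons_val_one, Fin.sum_univ_two]
  ring

/-- Both branches of `yvec` have the denominator `2 ^ ((m - 1) / 2)`, also at `m = 0` where the
natural-number subtractions truncate. -/
lemma yvec_eq (l : ℝ) (m : ℕ) :
    yvec l m = ((-(√3 + 1)) ^ m / 2 ^ ((m - 1) / 2) / (2 * √2 * l),
      (√3 - 1) ^ m / 2 ^ ((m - 1) / 2) / (2 * √2 * l)) := by
  unfold yvec
  split_ifs with h
  · rw [Odd.neg_pow (Nat.odd_iff.2 h)]
    ext <;> simp only [div_div] <;> ring
  · rw [Even.neg_pow (Nat.even_iff.2 (by omega)), show m / 2 - 1 = (m - 1) / 2 by omega]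
    ext <;> simp only [div_div] <;> ring

theorem minimum_vectors_characterize_general
    (l : ℝ) (f₀ : Fin 2 → ℤ) (hf₀ : f₀ ≠ 0)
    (x₀ : ℝ × ℝ)
    (hx : x₀ = (G₂.mulVec (fun i => (f₀ i : ℝ)) 0 / l,
                G₂.mulVec (fun i => (f₀ i : ℝ)) 1 / l))
    (m : ℕ)
    (h1 : |x₀.1| < |(yvec l m).1|) :
    (yvec l m).2 < |x₀.2| := by
  have hne : f₀ 0 - f₀ 1 ≠ 0 ∨ f₀ 0 + f₀ 1 ≠ 0 := by
    by_contra! h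
    refine hf₀ (funext fun i => ?_)
    fin_cases i <;> simp only [Fin.zero_eta, Fin.mk_one, Pi.zero_apply] <;> omega
  have hcore := lt_abs_sqrt_three_mul_add_of_abs_sqrt_three_mul_sub_lt (m := m)
    ⟨f₀ 0, by ring⟩ hne
  push_cast at hcore
  simp only [hx, G₂_mulVec_zero, G₂_mulVec_one, div_div, neg_div, abs_neg] at h1 ⊢
  rw [yvec_eq] at h1 ⊢
  refine div_lt_abs_div_of_abs_div_lt
    (div_pos (pow_pos sqrt_three_sub_one_pos _) (by positivity)).le (fun h => hcore ?_) h1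
  rwa [abs_div, abs_pow, abs_pow, abs_neg, abs_two, abs_of_pos (by positivity : 0 < √3 + 1)] at h

/-- Proposition 1 of He (2017): if `x₀ = G₂ f₀ / l` is a nonzero lattice point with
`|x₀,₁| < |y_{m,1}|`, then `|x₀,₂| > y_{m,2}`. -/
theorem minimum_vectors_characterize
    (l : ℝ) (hl : 0 < l) (f₀ : Fin 2 → ℤ) (hf₀ : f₀ ≠ 0)
    (x₀ : ℝ × ℝ)
    (hx : x₀ = (G₂.mulVec (fun i => (f₀ i : ℝ)) 0 / l,
                G₂.mulVec (fun i => (f₀ i : ℝ)) 1 / l))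
    (m : ℕ) (hm : 1 ≤ m)
    (h1 : |x₀.1| < |(yvec l m).1|) :
    (yvec l m).2 < |x₀.2| :=
  minimum_vectors_characterize_general l f₀ hf₀ x₀ hx m h1
end

section
/- Fix l > 0 and let y_m be the minimum vectors for G₂. Then y₁ = G₂·(0,1)ᵀ/l and y₂ = G₂·(−1,−3)ᵀ/l, and for every integer k ≥ 1 the recurrences y_{2k+1} = y_{2k−1} − y_{2k} and y_{2k+2} = y_{2k} − 2·y_{2k+1} hold. Consequently, every y_m belongs to the scaled lattice {G₂ f / l : f ∈ ℤ²}. -/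
open Matrix

lemma yvec_odd' (l : ℝ) (k : ℕ) :
    yvec l (2*k+1) = (-((Real.sqrt 3 + 1) ^ (2*k+1)) / ((2:ℝ)^k * 2 * Real.sqrt 2) / l,
      ((Real.sqrt 3 - 1) ^ (2*k+1)) / ((2:ℝ)^k * 2 * Real.sqrt 2) / l) := by
  have h1 : (2*k+1) % 2 = 1 := by omega
  have h2 : (2*k+1-1)/2 = k := by omega
  simp [yvec, h1, h2]

lemma yvec_even' (l : ℝ) (k : ℕ) :
    yvec l (2*k+2) = (((Real.sqrt 3 + 1) ^ (2*k+2)) / ((2:ℝ)^k * 2 * Real.sqrt 2) / l,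
      ((Real.sqrt 3 - 1) ^ (2*k+2)) / ((2:ℝ)^k * 2 * Real.sqrt 2) / l) := by
  have h1 : ¬ ((2*k+2) % 2 = 1) := by omega
  have h2 : (2*k+2)/2 - 1 = k := by omega
  simp [yvec, h1, h2]

lemma sqA : (Real.sqrt 3 + 1) ^ 2 = 2 + 2 * (Real.sqrt 3 + 1) := by
  have h := Real.sq_sqrt (show (0:ℝ) ≤ 3 by norm_num)
  nlinarith [h]

lemma sqB : (Real.sqrt 3 - 1) ^ 2 = 2 - 2 * (Real.sqrt 3 - 1) := by
  have h := Real.sq_sqrt (show (0:ℝ) ≤ 3 by norm_num)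
  nlinarith [h]

lemma powA (n : ℕ) : (Real.sqrt 3 + 1) ^ (n+2)
    = 2 * (Real.sqrt 3 + 1) ^ n + 2 * (Real.sqrt 3 + 1) ^ (n+1) := by
  rw [pow_add, sqA, pow_succ]; ring

lemma powB (n : ℕ) : (Real.sqrt 3 - 1) ^ (n+2)
    = 2 * (Real.sqrt 3 - 1) ^ n - 2 * (Real.sqrt 3 - 1) ^ (n+1) := by
  rw [pow_add, sqB, pow_succ]; ring

lemma mulVec0 (v : Fin 2 → ℝ) : G₂.mulVec v 0
    = (Real.sqrt 3 - 1) / (2 * Real.sqrt 2) * v 0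
      + (-(Real.sqrt 3 + 1) / (2 * Real.sqrt 2)) * v 1 := by
  simp [G₂, Matrix.mulVec, dotProduct, Fin.sum_univ_two]

lemma mulVec1 (v : Fin 2 → ℝ) : G₂.mulVec v 1
    = (-(Real.sqrt 3 + 1) / (2 * Real.sqrt 2)) * v 0
      + (Real.sqrt 3 - 1) / (2 * Real.sqrt 2) * v 1 := by
  simp [G₂, Matrix.mulVec, dotProduct, Fin.sum_univ_two]

/-- `y₁ = G₂ (0,1)ᵀ / l`, `y₂ = G₂ (-1,-3)ᵀ / l`, the recurrences
`y_{2k+1} = y_{2k-1} - y_{2k}` and `y_{2k+2} = y_{2k} - 2 y_{2k+1}` hold for all `k ≥ 1`,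
and consequently every `y_m` belongs to the scaled lattice `{G₂ f / l : f ∈ ℤ²}`. -/
theorem yvec_recurrences_and_lattice (l : ℝ) (hl : 0 < l) :
    ((yvec l 1).1 = G₂.mulVec ![0, 1] 0 / l ∧ (yvec l 1).2 = G₂.mulVec ![0, 1] 1 / l) ∧
    ((yvec l 2).1 = G₂.mulVec ![-1, -3] 0 / l ∧
      (yvec l 2).2 = G₂.mulVec ![-1, -3] 1 / l) ∧
    (∀ k : ℕ, 1 ≤ k →
      (yvec l (2 * k + 1)).1 = (yvec l (2 * k - 1)).1 - (yvec l (2 * k)).1 ∧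
      (yvec l (2 * k + 1)).2 = (yvec l (2 * k - 1)).2 - (yvec l (2 * k)).2 ∧
      (yvec l (2 * k + 2)).1 = (yvec l (2 * k)).1 - 2 * (yvec l (2 * k + 1)).1 ∧
      (yvec l (2 * k + 2)).2 = (yvec l (2 * k)).2 - 2 * (yvec l (2 * k + 1)).2) ∧
    (∀ m : ℕ, 1 ≤ m → ∃ f : Fin 2 → ℤ,
      (yvec l m).1 = G₂.mulVec (fun i => (f i : ℝ)) 0 / l ∧
      (yvec l m).2 = G₂.mulVec (fun i => (f i : ℝ)) 1 / l) := by
  have hl' : l ≠ 0 := ne_of_gt hl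
  have hs2 : Real.sqrt 2 ≠ 0 := by positivity
  have hs3 : Real.sqrt 3 ^ 2 = 3 := Real.sq_sqrt (by norm_num)
  -- part 1
  have p1 : (yvec l 1).1 = G₂.mulVec ![0, 1] 0 / l ∧ (yvec l 1).2 = G₂.mulVec ![0, 1] 1 / l := by
    constructor <;> simp [yvec, mulVec0, mulVec1]
  -- part 2
  have p2 : (yvec l 2).1 = G₂.mulVec ![-1, -3] 0 / l ∧
      (yvec l 2).2 = G₂.mulVec ![-1, -3] 1 / l := by
    constructor <;> simp [yvec, mulVec0, mulVec1] <;> field_simp <;> nlinarith [hs3]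
  -- part 3 : recurrences
  have p3 : ∀ k : ℕ, 1 ≤ k →
      (yvec l (2 * k + 1)).1 = (yvec l (2 * k - 1)).1 - (yvec l (2 * k)).1 ∧
      (yvec l (2 * k + 1)).2 = (yvec l (2 * k - 1)).2 - (yvec l (2 * k)).2 ∧
      (yvec l (2 * k + 2)).1 = (yvec l (2 * k)).1 - 2 * (yvec l (2 * k + 1)).1 ∧
      (yvec l (2 * k + 2)).2 = (yvec l (2 * k)).2 - 2 * (yvec l (2 * k + 1)).2 := by
    intro k hk
    obtain ⟨j, rfl⟩ : ∃ j, k = j + 1 := ⟨k - 1, by omega⟩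
    have h2j : (2:ℝ) ^ j ≠ 0 := by positivity
    have E1 : yvec l (2*(j+1)+1)
        = (-((Real.sqrt 3 + 1) ^ (2*(j+1)+1)) / ((2:ℝ)^(j+1) * 2 * Real.sqrt 2) / l,
          ((Real.sqrt 3 - 1) ^ (2*(j+1)+1)) / ((2:ℝ)^(j+1) * 2 * Real.sqrt 2) / l) :=
      yvec_odd' l (j+1)
    have E2 : yvec l (2*(j+1)-1)
        = (-((Real.sqrt 3 + 1) ^ (2*j+1)) / ((2:ℝ)^j * 2 * Real.sqrt 2) / l,
          ((Real.sqrt 3 - 1) ^ (2*j+1)) / ((2:ℝ)^j * 2 * Real.sqrt 2) / l) := by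
      rw [show 2*(j+1)-1 = 2*j+1 from by omega]; exact yvec_odd' l j
    have E3 : yvec l (2*(j+1))
        = (((Real.sqrt 3 + 1) ^ (2*j+2)) / ((2:ℝ)^j * 2 * Real.sqrt 2) / l,
          ((Real.sqrt 3 - 1) ^ (2*j+2)) / ((2:ℝ)^j * 2 * Real.sqrt 2) / l) := by
      rw [show 2*(j+1) = 2*j+2 from by ring]; exact yvec_even' l j
    have E4 : yvec l (2*(j+1)+2)
        = (((Real.sqrt 3 + 1) ^ (2*(j+1)+2)) / ((2:ℝ)^(j+1) * 2 * Real.sqrt 2) / l,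
          ((Real.sqrt 3 - 1) ^ (2*(j+1)+2)) / ((2:ℝ)^(j+1) * 2 * Real.sqrt 2) / l) :=
      yvec_even' l (j+1)
    rw [E1, E2, E3, E4]
    have hA1 := powA (2*j+1)
    have hB1 := powB (2*j+1)
    have hA2 := powA (2*j+2)
    have hB2 := powB (2*j+2)
    rw [show 2*j+1+2 = 2*(j+1)+1 from by ring, show 2*j+1+1 = 2*j+2 from by ring]
      at hA1 hB1
    rw [show 2*j+2+2 = 2*(j+1)+2 from by ring, show 2*j+2+1 = 2*(j+1)+1 from by ring]
      at hA2 hB2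
    refine ⟨?_, ?_, ?_, ?_⟩
    · simp only [hA1]; field_simp; ring
    · simp only [hB1]; field_simp; ring
    · simp only [hA2, hA1]; field_simp; ring
    · simp only [hB2, hB1]; field_simp; ring
  -- part 4 : lattice membership
  have main : ∀ k : ℕ,
      (∃ f : Fin 2 → ℤ,
        (yvec l (2 * k + 1)).1 = G₂.mulVec (fun i => (f i : ℝ)) 0 / l ∧
        (yvec l (2 * k + 1)).2 = G₂.mulVec (fun i => (f i : ℝ)) 1 / l) ∧
      (∃ g : Fin 2 → ℤ,
        (yvec l (2 * k + 2)).1 = G₂.mulVec (fun i => (g i : ℝ)) 0 / l ∧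
        (yvec l (2 * k + 2)).2 = G₂.mulVec (fun i => (g i : ℝ)) 1 / l) := by
    intro k
    induction k with
    | zero =>
      constructor
      · refine ⟨![0, 1], ?_, ?_⟩
        · rw [show 2 * 0 + 1 = 1 from rfl, p1.1]; norm_num [mulVec0]
        · rw [show 2 * 0 + 1 = 1 from rfl, p1.2]; norm_num [mulVec1]
      · refine ⟨![-1, -3], ?_, ?_⟩
        · rw [show 2 * 0 + 2 = 2 from rfl, p2.1]; norm_num [mulVec0]
        · rw [show 2 * 0 + 2 = 2 from rfl, p2.2]; norm_num [mulVec1]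
    | succ k ih =>
      obtain ⟨⟨f, hf1, hf2⟩, ⟨g, hg1, hg2⟩⟩ := ih
      obtain ⟨r1, r2, r3, r4⟩ := p3 (k + 1) (by omega)
      have h22 : 2 * (k + 1) = 2 * k + 2 := by ring
      simp only [h22, show 2*k+2-1 = 2*k+1 from by omega] at r1 r2 r3 r4 ⊢
      constructor
      · refine ⟨fun i => f i - g i, ?_, ?_⟩
        · rw [r1, hf1, hg1, mulVec0, mulVec0, mulVec0]
          push_cast
          field_simp
          ring
        · rw [r2, hf2, hg2, mulVec1, mulVec1, mulVec1]
          push_cast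
          field_simp
          ring
      · refine ⟨fun i => g i - 2 * (f i - g i), ?_, ?_⟩
        · rw [r3, r1, hf1, hg1, mulVec0, mulVec0, mulVec0]
          push_cast
          field_simp
          ring
        · rw [r4, r2, hf2, hg2, mulVec1, mulVec1, mulVec1]
          push_cast
          field_simp
          ring
  refine ⟨p1, p2, p3, ?_⟩
  intro m hm
  rcases Nat.even_or_odd m with ⟨j, hj⟩ | ⟨j, hj⟩
  · obtain ⟨i, rfl⟩ : ∃ i, j = i + 1 := ⟨j - 1, by omega⟩
    have : m = 2 * i + 2 := by omega
    rw [this]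
    exact (main i).2
  · have : m = 2 * j + 1 := by omega
    rw [this]
    exact (main j).1
end

section
/- Let n ≥ 2 be an integer, l = (√3·n/2)^{1/2}, δ ∈ ℝ², and D = {G₂ f/l + δ : f ∈ ℤ²} ∩ [0,1]², and suppose D has exactly n elements. Then for every point x = (x₁, x₂) ∈ D whose second coordinate is not maximal in D (i.e., x₂ < max{y₂ : (y₁, y₂) ∈ D}), there exists a point y = (y₁, y₂) ∈ D with y₂ > x₂ and y₂ − x₂ ≤ (2√3/3 + 1)·n^{−1}. -/
/-!
Up to the factor `-1/(2√2)`, the lattice `G₂ ℤ²` is the image of the ideal `(1 + √3)` of `ℤ√3`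
(the `z` with `z.re ≡ z.im mod 2`) under `z ↦ (σ z, σ' z)`, the two real embeddings. Multiplying
by a power `T` of the unit `2 + √3` therefore maps the lattice to itself while scaling the two
coordinates by `T` and `T⁻¹`. Choosing `T` so that `√2 l / T` lies in a fundamental range of these
scalings, one of the four elements `1 + √3`, `-2`, `-3 - √3`, `-4 - 2√3` yields a lattice step
from `x` that keeps the first coordinate in `[0, 1]` and raises the second by at most
`(2 + √3) / (2 l²) = (2√3/3 + 1) / n`. Either `x` plus this step stays in the square, or the
step overshoots the top edge and the given higher point is already that close.
-/

open Matrix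

open Real Set

noncomputable def sqrt3Embedding : ℤ√3 →+* ℝ :=
  Zsqrtd.lift ⟨√3, by norm_num⟩

noncomputable def sqrt3ConjEmbedding : ℤ√3 →+* ℝ :=
  Zsqrtd.lift ⟨-√3, by norm_num⟩

local notation "σ" => sqrt3Embedding
local notation "σ'" => sqrt3ConjEmbedding

@[simp]
lemma sqrt3Embedding_apply (z : ℤ√3) : σ z = z.re + z.im * √3 := rfl

@[simp]
lemma sqrt3ConjEmbedding_apply (z : ℤ√3) : σ' z = z.re - z.im * √3 := by
  simp [sqrt3ConjEmbedding, sub_eq_add_neg]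

lemma map_units_zpow {M α F : Type*} [Monoid M] [DivisionMonoid α] [FunLike F M α]
    [MonoidHomClass F M α] (f : F) (u : Mˣ) (n : ℤ) : f ↑(u ^ n) = f ↑u ^ n :=
  ((f : M →* α).comp (Units.coeHom M)).map_zpow u n

lemma Zsqrtd.even_re_sub_im_mul {d : ℤ} (hd : Odd d) {z : ℤ√d} (hz : Even (z.re - z.im))
    (w : ℤ√d) : Even ((z * w).re - (z * w).im) := by
  have h : (z * w).re - (z * w).im
      = (z.re - z.im) * (w.re - w.im) + (d - 1) * z.im * w.im := by
    simp only [Zsqrtd.re_mul, Zsqrtd.im_mul]; ring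
  rw [h]
  exact (hz.mul_right _).add (((hd.sub_odd odd_one).mul_right _).mul_right _)

def fundamentalUnit : (ℤ√3)ˣ := ⟨⟨2, 1⟩, ⟨2, -1⟩, by decide, by decide⟩

lemma sqrt3Embedding_fundamentalUnit_zpow (n : ℤ) :
    σ ↑(fundamentalUnit ^ n) = (2 + √3) ^ n := by
  rw [map_units_zpow]; simp [fundamentalUnit]

lemma sqrt3ConjEmbedding_fundamentalUnit_zpow (n : ℤ) :
    σ' ↑(fundamentalUnit ^ n) = ((2 + √3) ^ n)⁻¹ := by
  have h : (2 : ℝ) - √3 = (2 + √3)⁻¹ := eq_inv_of_mul_eq_one_left <| by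
    linear_combination -Real.mul_self_sqrt (show (0 : ℝ) ≤ 3 by norm_num)
  rw [map_units_zpow, ← _root_.inv_zpow]; simp [fundamentalUnit, ← h]

lemma exists_G₂_mulVec_eq {z : ℤ√3} (hz : Even (z.re - z.im)) :
    ∃ e : Fin 2 → ℤ, G₂ *ᵥ (fun j => (e j : ℝ)) = ![-σ z / (2 * √2), -σ' z / (2 * √2)] := by
  obtain ⟨p, hp⟩ := hz
  refine ⟨![p, p + z.im], ?_⟩
  have hre : (z.re : ℝ) = 2 * p + z.im := by exact_mod_cast (by omega : z.re = 2 * p + z.im)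
  ext i
  fin_cases i <;>
  · simp only [G₂, mulVec, dotProduct, Fin.sum_univ_two, of_apply, cons_val', cons_val_zero,
      cons_val_one, Fin.zero_eta, Fin.mk_one, cons_val_fin_one, Int.cast_add, hre,
      sqrt3Embedding_apply, sqrt3ConjEmbedding_apply]
    field_simp
    ring

lemma exists_even_sqrt3_in_window {L s : ℝ} (hL : L ∈ Ico (1 + √3) ((2 + √3) * (1 + √3)))
    (hs : s ∈ Icc 0 1) :
    ∃ c : ℤ√3, Even (c.re - c.im) ∧ s - σ c / (2 * L) ∈ Icc 0 1 ∧
      0 < -σ' c ∧ -σ' c * L ≤ 2 * (2 + √3) := by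
  obtain ⟨hL₁, hL₂⟩ := hL
  obtain ⟨hs₀, hs₁⟩ := hs
  have h3 : √3 * √3 = 3 := Real.mul_self_sqrt (by norm_num)
  have h3₁ : 1 < √3 := by nlinarith [Real.sqrt_nonneg 3]
  have h3₂ : √3 < 2 := by nlinarith [Real.sqrt_nonneg 3]
  have window : ∀ p : ℝ, 2 * L * (s - 1) ≤ p → p ≤ 2 * L * s → s - p / (2 * L) ∈ Icc 0 1 := by
    intro p h₁ h₂
    have hL : 0 < 2 * L := by linarith
    constructor
    · rw [sub_nonneg, div_le_iff₀ hL]; linarith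
    · rw [sub_le_comm, le_div_iff₀ hL]; linarith
  rcases le_or_gt (1 + √3) (2 * L * s) with hu | hu
  · refine ⟨⟨1, 1⟩, ⟨0, rfl⟩, window _ ?_ ?_, ?_, ?_⟩ <;> simp <;> nlinarith
  rcases lt_or_ge L (2 + √3) with hL₃ | hL₃
  · refine ⟨⟨-2, 0⟩, ⟨-1, rfl⟩, window _ ?_ ?_, ?_, ?_⟩ <;> simp <;> nlinarith
  rcases lt_or_ge (2 * L) ((2 + √3) * (1 + √3)) with hL₄ | hL₄
  · refine ⟨⟨-3, -1⟩, ⟨-1, rfl⟩, window _ ?_ ?_, ?_, ?_⟩ <;> simp <;> nlinarith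
  · refine ⟨⟨-4, -2⟩, ⟨-1, rfl⟩, window _ ?_ ?_, ?_, ?_⟩ <;> simp <;> nlinarith

lemma exists_short_upward_G₂_step {l s : ℝ} (hl : 0 < l) (hs : s ∈ Icc 0 1) :
    ∃ e : Fin 2 → ℤ, s + (G₂ *ᵥ (fun j => (e j : ℝ))) 0 / l ∈ Icc 0 1 ∧
      0 < (G₂ *ᵥ (fun j => (e j : ℝ))) 1 / l ∧
      (G₂ *ᵥ (fun j => (e j : ℝ))) 1 / l ≤ (2 + √3) / (2 * l ^ 2) := by
  obtain ⟨J, hJ₁, hJ₂⟩ := exists_mem_Ico_zpow (x := √2 * l / (1 + √3)) (by positivity)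
    (by linarith [Real.sqrt_nonneg 3] : (1 : ℝ) < 2 + √3)
  set T := (2 + √3) ^ J with hTdef
  have hT : 0 < T := by positivity
  set L := √2 * l / T with hLdef
  have hL : L ∈ Ico (1 + √3) ((2 + √3) * (1 + √3)) := by
    rw [zpow_add_one₀ (by positivity)] at hJ₂
    rw [le_div_iff₀ (by positivity)] at hJ₁
    rw [div_lt_iff₀ (by positivity)] at hJ₂
    constructor
    · rw [le_div_iff₀ hT]; linarith
    · rw [div_lt_iff₀ hT]; linarith
  have hL₀ : 0 < L := by linarith [hL.1, Real.sqrt_nonneg 3]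
  obtain ⟨c, hc, hwindow, hpos, hbound⟩ := exists_even_sqrt3_in_window hL hs
  obtain ⟨e, he⟩ := exists_G₂_mulVec_eq
    (Zsqrtd.even_re_sub_im_mul (by decide) hc ↑(fundamentalUnit ^ J))
  simp only [map_mul, sqrt3Embedding_fundamentalUnit_zpow,
    sqrt3ConjEmbedding_fundamentalUnit_zpow, ← hTdef] at he
  clear_value T L
  have h2 : √2 * √2 = 2 := Real.mul_self_sqrt (by norm_num)
  have he₀ : (G₂ *ᵥ (fun j => (e j : ℝ))) 0 / l = -(σ c / (2 * L)) := by
    rw [he, cons_val_zero, hLdef]; field_simp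
  have he₁ : (G₂ *ᵥ (fun j => (e j : ℝ))) 1 / l = -σ' c * L / (4 * l ^ 2) := by
    rw [he, cons_val_one, cons_val_zero, hLdef]; field_simp; linear_combination 2 * σ' c * h2
  refine ⟨e, by rwa [he₀, ← sub_eq_add_neg],
    by rw [he₁]; exact div_pos (mul_pos hpos hL₀) (by positivity), ?_⟩
  rw [he₁, div_le_div_iff₀ (by positivity) (by positivity)]
  nlinarith

theorem magic_angle_second_coordinate_gap_general
    (n : ℕ) (hn : 2 ≤ n)
    (l : ℝ) (hl : l = Real.sqrt (Real.sqrt 3 * n / 2))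
    (δ : Fin 2 → ℝ)
    (D : Set (Fin 2 → ℝ))
    (hD : D = {x | (∃ f : Fin 2 → ℤ, ∀ i,
        x i = G₂.mulVec (fun j => (f j : ℝ)) i / l + δ i) ∧
      ∀ i, x i ∈ Set.Icc (0 : ℝ) 1})
    (x : Fin 2 → ℝ) (hx : x ∈ D)
    (hnotmax : ∃ z ∈ D, x 1 < z 1) :
    ∃ y ∈ D, x 1 < y 1 ∧ y 1 - x 1 ≤ (2 * Real.sqrt 3 / 3 + 1) * (n : ℝ)⁻¹ := by
  obtain ⟨z, hz, hxz⟩ := hnotmax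
  have hn₀ : (0 : ℝ) < n := by positivity
  have hl₀ : 0 < l := by rw [hl]; positivity
  have hgap : (2 + √3) / (2 * l ^ 2) = (2 * √3 / 3 + 1) * (n : ℝ)⁻¹ := by
    rw [hl, Real.sq_sqrt (by positivity)]
    field_simp
    linear_combination -2 * Real.mul_self_sqrt (show (0 : ℝ) ≤ 3 by norm_num)
  rw [← hgap]
  subst hD
  obtain ⟨⟨f, hf⟩, hbox⟩ := hx
  obtain ⟨e, h₀, h₁, h₁'⟩ := exists_short_upward_G₂_step hl₀ (hbox 0)
  by_cases htop : x 1 + (G₂ *ᵥ (fun j => (e j : ℝ))) 1 / l ≤ 1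
  · refine ⟨fun i => x i + (G₂ *ᵥ (fun j => (e j : ℝ))) i / l, ⟨⟨f + e, fun i => ?_⟩,
      Fin.forall_fin_two.2 ⟨h₀, by dsimp only; linarith [(hbox 1).1], htop⟩⟩,
      by simpa using h₁, by simpa using h₁'⟩
    simp only [hf, Pi.add_apply, Int.cast_add, ← Pi.add_def, mulVec_add]
    ring
  · exact ⟨z, hz, hxz, by linarith [(hz.2 1).2]⟩

/-- Theorem 4(iii) of He (2017): in the `n`-point rotated sphere packing design with the
magic angle, every point whose second coordinate is not maximal has a point above it
within vertical distance `(2√3/3 + 1) n⁻¹`. -/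
theorem magic_angle_second_coordinate_gap
    (n : ℕ) (hn : 2 ≤ n)
    (l : ℝ) (hl : l = Real.sqrt (Real.sqrt 3 * n / 2))
    (δ : Fin 2 → ℝ)
    (D : Set (Fin 2 → ℝ))
    (hD : D = {x | (∃ f : Fin 2 → ℤ, ∀ i,
        x i = G₂.mulVec (fun j => (f j : ℝ)) i / l + δ i) ∧
      ∀ i, x i ∈ Set.Icc (0 : ℝ) 1})
    (hcard : D.ncard = n)
    (x : Fin 2 → ℝ) (hx : x ∈ D)
    (hnotmax : ∃ z ∈ D, x 1 < z 1) :
    ∃ y ∈ D, x 1 < y 1 ∧ y 1 - x 1 ≤ (2 * Real.sqrt 3 / 3 + 1) * (n : ℝ)⁻¹ :=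
  magic_angle_second_coordinate_gap_general n hn l hl δ D hD x hx hnotmax
end

section
/- For every integer p ≥ 2, let G = (√(p+1)/√p)·I_p − (1/(√p·(√(p+1)−1)))·J_p with rows v₁, …, v_p, and for each j let η_j = v_j − P_j(v_j) be the component of v_j orthogonal to the span of the other rows. Then for every j ∈ {1, …, p}, the squared Euclidean norm of η_j equals (p+1)/(2p). -/
/-!
The rows of `G` have Gram matrix `G Gᵀ = ((p + 1) I − J) / p`. For any family `v₁, …, vₙ` with
Gram matrix `c ((n + 1) I − J)`, the vector `u = (v_j + ∑ₖ vₖ) / 2` is orthogonal to every `vₖ`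
with `k ≠ j`, while `v_j − u = −(1/2) ∑_{k ≠ j} vₖ` lies in their span. Hence `η_j = u`, and
`‖η_j‖² = ⟪η_j, v_j⟫ = c (n + 1) / 2`.
-/

open Matrix

/-- The generator matrix of the lattice `A_p*`:
`G = (√(p+1)/√p) I_p − (1/(√p(√(p+1)−1))) J_p`. -/
noncomputable def AstarGen (p : ℕ) : Matrix (Fin p) (Fin p) ℝ :=
  (Real.sqrt (p + 1) / Real.sqrt p) • (1 : Matrix (Fin p) (Fin p) ℝ)
    - (1 / (Real.sqrt p * (Real.sqrt (p + 1) - 1))) • Matrix.of (fun _ _ => (1 : ℝ))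

open scoped RealInnerProductSpace

section ScaledSimplexGram

variable {ι E : Type*} [Fintype ι] [DecidableEq ι]
  [NormedAddCommGroup E] [InnerProductSpace ℝ E] {v : ι → E} {c : ℝ}

theorem sum_inner_of_gram
    (hv : ∀ k m, ⟪v k, v m⟫ = c * ((Fintype.card ι + 1) * (if k = m then 1 else 0) - 1))
    (m : ι) : ∑ k, ⟪v k, v m⟫ = c := by
  simp only [hv, mul_ite, mul_one, mul_zero, Finset.sum_ite_eq', Finset.mem_univ, if_true,
    ← Finset.mul_sum, Finset.sum_sub_distrib, Finset.sum_ite_eq', Finset.sum_const,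
    Finset.card_univ, nsmul_eq_mul]
  ring

theorem inner_half_add_sum_of_gram
    (hv : ∀ k m, ⟪v k, v m⟫ = c * ((Fintype.card ι + 1) * (if k = m then 1 else 0) - 1))
    (j m : ι) :
    ⟪(2 : ℝ)⁻¹ • (v j + ∑ k, v k), v m⟫ = if j = m then c * (Fintype.card ι + 1) / 2 else 0 := by
  rw [real_inner_smul_left, inner_add_left, sum_inner, sum_inner_of_gram hv, hv]
  split_ifs <;> ring

theorem half_add_sum_mem_orthogonal_span_of_gram
    (hv : ∀ k m, ⟪v k, v m⟫ = c * ((Fintype.card ι + 1) * (if k = m then 1 else 0) - 1))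
    (j : ι) :
    (2 : ℝ)⁻¹ • (v j + ∑ k, v k) ∈ (Submodule.span ℝ (v '' {k | k ≠ j}))ᗮ := by
  refine (Submodule.isOrtho_span.mpr ?_).le (Submodule.mem_span_singleton_self _)
  rintro _ rfl _ ⟨k, hk, rfl⟩
  rw [inner_half_add_sum_of_gram hv, if_neg (Ne.symm hk)]

theorem sub_half_add_sum_mem_span (j : ι) :
    v j - (2 : ℝ)⁻¹ • (v j + ∑ k, v k) ∈ Submodule.span ℝ (v '' {k | k ≠ j}) := by
  have hsum : v j - (2 : ℝ)⁻¹ • (v j + ∑ k, v k) = ∑ k ∈ Finset.univ.erase j, (-(2 : ℝ)⁻¹) • v k := by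
    rw [← Finset.smul_sum, Finset.sum_erase_eq_sub (Finset.mem_univ j)]
    module
  rw [hsum]
  exact Submodule.sum_mem _ fun k hk =>
    Submodule.smul_mem _ _ (Submodule.subset_span ⟨k, Finset.ne_of_mem_erase hk, rfl⟩)

theorem norm_sub_starProjection_sq (K : Submodule ℝ E) [K.HasOrthogonalProjection] (x : E) :
    ‖x - K.starProjection x‖ ^ 2 = ⟪x - K.starProjection x, x⟫ := by
  have horth : ⟪x - K.starProjection x, K.starProjection x⟫ = 0 :=
    K.inner_left_of_mem_orthogonal (K.starProjection_apply_mem x)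
      (K.sub_starProjection_mem_orthogonal x)
  rw [← real_inner_self_eq_norm_sq, inner_sub_right (x - K.starProjection x), horth, sub_zero]

theorem norm_sq_sub_starProjection_of_gram [FiniteDimensional ℝ E]
    (hv : ∀ k m, ⟪v k, v m⟫ = c * ((Fintype.card ι + 1) * (if k = m then 1 else 0) - 1))
    (j : ι) :
    ‖v j - (Submodule.span ℝ (v '' {k | k ≠ j})).starProjection (v j)‖ ^ 2
      = c * (Fintype.card ι + 1) / 2 := by
  have hη : v j - (Submodule.span ℝ (v '' {k | k ≠ j})).starProjection (v j)
      = (2 : ℝ)⁻¹ • (v j + ∑ k, v k) := by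
    rw [Submodule.eq_starProjection_of_mem_orthogonal (sub_half_add_sum_mem_span j)
      (by simpa using half_add_sum_mem_orthogonal_span_of_gram hv j)]
    abel
  rw [norm_sub_starProjection_sq, hη, inner_half_add_sum_of_gram hv, if_pos rfl]

end ScaledSimplexGram

theorem sum_ite_sub_mul_ite_sub {ι : Type*} [Fintype ι] [DecidableEq ι] (a b : ℝ) (k m : ι) :
    ∑ i, (a * (if k = i then 1 else 0) - b) * (a * (if m = i then 1 else 0) - b)
      = a ^ 2 * (if k = m then 1 else 0) - (2 * a * b - Fintype.card ι * b ^ 2) := by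
  have hexpand : ∀ i, (a * (if k = i then 1 else 0) - b) * (a * (if m = i then 1 else 0) - b)
      = a ^ 2 * (if m = i then (if k = i then 1 else 0) else 0)
        - a * b * (if k = i then 1 else 0) - a * b * (if m = i then 1 else 0) + b ^ 2 := by
    intro i; split_ifs <;> ring
  simp only [hexpand, Finset.sum_add_distrib, Finset.sum_sub_distrib, ← Finset.mul_sum,
    Finset.sum_ite_eq, Finset.mem_univ, if_true, Finset.sum_const, Finset.card_univ, nsmul_eq_mul]
  ring

theorem AstarGen_apply (p : ℕ) (k i : Fin p) :
    AstarGen p k i = Real.sqrt (p + 1) / Real.sqrt p * (if k = i then 1 else 0)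
      - 1 / (Real.sqrt p * (Real.sqrt (p + 1) - 1)) := by
  simp [AstarGen, Matrix.one_apply]

theorem AstarGen_coeff_relations {x : ℝ} (hx : 0 < x) :
    (Real.sqrt (x + 1) / Real.sqrt x) ^ 2 = (x + 1) / x ∧
      2 * (Real.sqrt (x + 1) / Real.sqrt x) * (1 / (Real.sqrt x * (Real.sqrt (x + 1) - 1)))
        - x * (1 / (Real.sqrt x * (Real.sqrt (x + 1) - 1))) ^ 2 = 1 / x := by
  have hr : Real.sqrt x ^ 2 = x := Real.sq_sqrt hx.le
  have hs : Real.sqrt (x + 1) ^ 2 = x + 1 := Real.sq_sqrt (by positivity)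
  have hr0 : 0 < Real.sqrt x := Real.sqrt_pos.2 hx
  have hs1 : Real.sqrt (x + 1) - 1 ≠ 0 := by nlinarith [Real.sqrt_nonneg (x + 1)]
  constructor
  · rw [div_pow, hr, hs]
  · field_simp
    linear_combination (2 * x - Real.sqrt x ^ 2) * hs + (2 * Real.sqrt (x + 1) - x - 2) * hr

theorem AstarGen_inner_rows {p : ℕ} (hp : 0 < p) {v : Fin p → EuclideanSpace ℝ (Fin p)}
    (hv : ∀ j k, v j k = AstarGen p j k) (k m : Fin p) :
    ⟪v k, v m⟫ = 1 / p * ((p + 1) * (if k = m then 1 else 0) - 1) := by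
  have hp' : (0 : ℝ) < p := Nat.cast_pos.mpr hp
  obtain ⟨ha, hab⟩ := AstarGen_coeff_relations hp'
  have hrows : ⟪v k, v m⟫ = ∑ i, v k i * v m i := by
    simp only [EuclideanSpace.inner_eq_star_dotProduct, dotProduct, star_trivial, mul_comm]
  rw [hrows]
  simp only [hv, AstarGen_apply]
  rw [sum_ite_sub_mul_ite_sub, Fintype.card_fin, ha, hab]
  field_simp

theorem AstarGen_eta_norm_sq_general (p : ℕ)
    (v : Fin p → EuclideanSpace ℝ (Fin p)) (hv : ∀ j k, v j k = AstarGen p j k)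
    (η : Fin p → EuclideanSpace ℝ (Fin p))
    (hη : ∀ j, η j = v j -
      (Submodule.orthogonalProjectionOnto (Submodule.span ℝ (v '' {k | k ≠ j})) (v j) : EuclideanSpace ℝ (Fin p)))
    (j : Fin p) :
    ‖η j‖ ^ 2 = ((p : ℝ) + 1) / (2 * p) := by
  have hp : 0 < p := j.pos
  have hgram (k m : Fin p) : ⟪v k, v m⟫
      = 1 / p * ((Fintype.card (Fin p) + 1) * (if k = m then 1 else 0) - 1) := by
    rw [Fintype.card_fin, AstarGen_inner_rows hp hv]
  rw [hη, ← Submodule.starProjection_apply, norm_sq_sub_starProjection_of_gram hgram,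
    Fintype.card_fin]
  ring

/-- For the generator matrix of `A_p*` with rows `v j`, the component `η j` of `v j`
orthogonal to the span of the other rows satisfies `‖η j‖² = (p+1)/(2p)`. -/
theorem AstarGen_eta_norm_sq (p : ℕ) (hp : 2 ≤ p)
    (v : Fin p → EuclideanSpace ℝ (Fin p)) (hv : ∀ j k, v j k = AstarGen p j k)
    (η : Fin p → EuclideanSpace ℝ (Fin p))
    (hη : ∀ j, η j = v j -
      (Submodule.orthogonalProjectionOnto (Submodule.span ℝ (v '' {k | k ≠ j})) (v j) : EuclideanSpace ℝ (Fin p)))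
    (j : Fin p) :
    ‖η j‖ ^ 2 = ((p : ℝ) + 1) / (2 * p) :=
  AstarGen_eta_norm_sq_general p v hv η hη j
end

section
/- The covering radius of the lattice generated by G₂ is at most √3/3: for every z ∈ ℝ² there exists f ∈ ℤ² such that ‖z − G₂ f‖ ≤ √3/3, where ‖·‖ is the Euclidean norm. -/
open Matrix

/-- Key covering lemma for the hexagonal quadratic form `x² - xy + y²`. -/
lemma hex_key (x y : ℝ) (hx : |x| ≤ 1/2) (hy : |y| ≤ 1/2) :
    ∃ m n : ℤ, ((x - m)^2 - (x - m)*(y - n) + (y - n)^2 ≤ 1/3) := by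
  rw [abs_le] at hx hy
  obtain ⟨hx1, hx2⟩ := hx
  obtain ⟨hy1, hy2⟩ := hy
  rcases le_or_gt (2*x - y) 1 with hA | hA
  · rcases le_or_gt (-1) (2*x - y) with hA' | hA'
    · rcases le_or_gt (x - 2*y) 1 with hB | hB
      · rcases le_or_gt (-1) (x - 2*y) with hB' | hB'
        · refine ⟨0, 0, ?_⟩
          push_cast
          rcases le_total x y with h | h
          · nlinarith [mul_nonneg (by linarith : (0:ℝ) ≤ 1 + x - 2*y) (by linarith : (0:ℝ) ≤ 1/2 + y),
              mul_nonneg (by linarith : (0:ℝ) ≤ 1 + 2*x - y) (by linarith : (0:ℝ) ≤ 1/2 - x),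
              mul_nonneg (by linarith : (0:ℝ) ≤ 1 + x - 2*y) (by linarith : (0:ℝ) ≤ y - x),
              mul_nonneg (by linarith : (0:ℝ) ≤ 1 + 2*x - y) (by linarith : (0:ℝ) ≤ y - x),
              mul_nonneg (by linarith : (0:ℝ) ≤ 1/2 + x) (by linarith : (0:ℝ) ≤ 1/2 - y)]
          · nlinarith [mul_nonneg (by linarith : (0:ℝ) ≤ 1 - x + 2*y) (by linarith : (0:ℝ) ≤ 1/2 - y),
              mul_nonneg (by linarith : (0:ℝ) ≤ 1 - 2*x + y) (by linarith : (0:ℝ) ≤ 1/2 + x),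
              mul_nonneg (by linarith : (0:ℝ) ≤ 1 - x + 2*y) (by linarith : (0:ℝ) ≤ x - y),
              mul_nonneg (by linarith : (0:ℝ) ≤ 1 - 2*x + y) (by linarith : (0:ℝ) ≤ x - y),
              mul_nonneg (by linarith : (0:ℝ) ≤ 1/2 - x) (by linarith : (0:ℝ) ≤ 1/2 + y)]
        · -- x - 2y < -1, hence x + y > 0 : use (0,1)
          refine ⟨0, 1, ?_⟩
          push_cast
          nlinarith [sq_nonneg (x + y - 1), mul_nonneg (by linarith : (0:ℝ) ≤ 1 + 2*x - y) (by linarith : (0:ℝ) ≤ -(x - 2*y) - 1)]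
      · -- x - 2y > 1, 2x - y ≤ 1, hence x + y < 0 : use (0,-1)
        refine ⟨0, -1, ?_⟩
        push_cast
        nlinarith [sq_nonneg (x + y + 1), mul_nonneg (by linarith : (0:ℝ) ≤ 1 - (2*x - y)) (by linarith : (0:ℝ) ≤ x - 2*y - 1)]
    · -- 2x - y < -1
      rcases le_or_gt (x + y) 0 with hC | hC
      · refine ⟨-1, 0, ?_⟩
        push_cast
        nlinarith [sq_nonneg (x + y), mul_nonneg (by linarith : (0:ℝ) ≤ -(2*x - y) - 1) (by linarith : (0:ℝ) ≤ -(x + y))]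
      · refine ⟨0, 1, ?_⟩
        push_cast
        nlinarith [sq_nonneg (x + y - 1), mul_nonneg (by linarith : (0:ℝ) ≤ -(2*x - y) - 1) (by linarith : (0:ℝ) ≤ x + y)]
  · -- 2x - y > 1
    rcases le_or_gt 0 (x + y) with hC | hC
    · refine ⟨1, 0, ?_⟩
      push_cast
      nlinarith [sq_nonneg (x + y), mul_nonneg (by linarith : (0:ℝ) ≤ 2*x - y - 1) (by linarith : (0:ℝ) ≤ x + y)]
    · refine ⟨0, -1, ?_⟩
      push_cast
      nlinarith [sq_nonneg (x + y + 1), mul_nonneg (by linarith : (0:ℝ) ≤ 2*x - y - 1) (by linarith : (0:ℝ) ≤ -(x + y))]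

/-- Covering lemma with arbitrary real offsets. -/
lemma hex_key' (a b : ℝ) :
    ∃ m n : ℤ, ((a - m)^2 - (a - m)*(b - n) + (b - n)^2 ≤ 1/3) := by
  obtain ⟨m, n, h⟩ := hex_key (a - round a) (b - round b)
    (by simpa using abs_sub_round a) (by simpa using abs_sub_round b)
  refine ⟨round a + m, round b + n, ?_⟩
  convert h using 3 <;> push_cast <;> ring

/-- The covering radius of the lattice generated by `G₂` is at most `√3/3`: every point
of `ℝ²` is within Euclidean distance `√3/3` of some lattice point `G₂ f`, `f ∈ ℤ²`. -/
theorem G₂_covering_radius (z : Fin 2 → ℝ) :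
    ∃ f : Fin 2 → ℤ,
      Real.sqrt (∑ i, (z i - G₂.mulVec (fun j => (f j : ℝ)) i) ^ 2) ≤
        Real.sqrt 3 / 3 := by
  have h2 : Real.sqrt 2 ^ 2 = 2 := Real.sq_sqrt (by norm_num)
  have h3 : Real.sqrt 3 ^ 2 = 3 := Real.sq_sqrt (by norm_num)
  have h2pos : (0:ℝ) < Real.sqrt 2 := Real.sqrt_pos.mpr (by norm_num)
  have h3pos : (0:ℝ) < Real.sqrt 3 := Real.sqrt_pos.mpr (by norm_num)
  set p : ℝ := (Real.sqrt 3 - 1) / (2 * Real.sqrt 2) with hp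
  set q : ℝ := -(Real.sqrt 3 + 1) / (2 * Real.sqrt 2) with hq
  have hpq1 : p^2 + q^2 = 1 := by
    rw [hp, hq]; field_simp; nlinarith [h2, h3]
  have hpq2 : p * q = -(1/4) := by
    rw [hp, hq]; field_simp; nlinarith [h2, h3]
  have hdet : q^2 - p^2 = Real.sqrt 3 / 2 := by
    rw [hp, hq]; field_simp; nlinarith [h2, h3]
  -- solve for coordinates a b with z = G₂ (a, b)
  set a : ℝ := 2 * (q * z 1 - p * z 0) / Real.sqrt 3 with ha
  set b : ℝ := 2 * (q * z 0 - p * z 1) / Real.sqrt 3 with hb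
  have hz0 : p * a + q * b = z 0 := by
    rw [ha, hb]; field_simp; linear_combination (2 * z 0) * hdet
  have hz1 : q * a + p * b = z 1 := by
    rw [ha, hb]; field_simp; linear_combination (2 * z 1) * hdet
  obtain ⟨m, n, hQ⟩ := hex_key' a b
  refine ⟨![m, n], ?_⟩
  have hsum : (∑ i, (z i - G₂.mulVec (fun j => ((![m, n] : Fin 2 → ℤ) j : ℝ)) i) ^ 2)
      = (a - m)^2 - (a - m)*(b - n) + (b - n)^2 := by
    simp only [Fin.sum_univ_two, G₂, Matrix.mulVec, dotProduct, Fin.sum_univ_two,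
      Matrix.cons_val', Matrix.cons_val_zero, Matrix.cons_val_one, Matrix.head_cons,
      Matrix.empty_val', Matrix.cons_val_fin_one, Matrix.head_fin_const, Matrix.of_apply]
    rw [← hz0, ← hz1, ← hp, ← hq]
    linear_combination ((a - (m:ℝ))^2 + (b - (n:ℝ))^2) * hpq1 + (4 * (a - (m:ℝ)) * (b - (n:ℝ))) * hpq2
  rw [hsum]
  have h13 : Real.sqrt 3 / 3 = Real.sqrt (1/3) := by
    rw [show (1:ℝ)/3 = (Real.sqrt 3 / 3)^2 by rw [div_pow, h3]; norm_num,
      Real.sqrt_sq (by positivity)]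
  rw [h13]
  exact Real.sqrt_le_sqrt hQ
end
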